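/- Let G be a just infinite group that is not virtually abelian, and let H be a nontrivial normal subgroup of G. Then H is just infinite if and only if every maximal (with respect to proper subgroups of finite index) subgroup of G containing H is just infinite. -/

import Mathlib

def ResiduallyFinite (G : Type*) [Group G] : Prop :=
  sInf {N : Subgroup G | N.Normal ∧ N.FiniteIndex} = ⊥

def JustInfinite (G : Type*) [Group G] : Prop :=
  Infinite G ∧ ResiduallyFinite G ∧
    ∀ N : Subgroup G, N.Normal → N ≠ ⊥ → N.FiniteIndex

def FinRadical (G : Type*) [Group G] : Set G :=
  { x | ∃ N : Subgroup G, N.Normal ∧ (N : Set G).Finite ∧ x ∈ N }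

def VirtuallyAbelian (G : Type*) [Group G] : Prop :=
  ∃ H : Subgroup G, H.FiniteIndex ∧ ∀ a b : H, a * b = b * a

def conjugatesSet (G : Type*) [Group G] (B : Subgroup G) : Set (Subgroup G) :=
  { C | ∃ g : G, B.map (MulAut.conj g).toMonoidHom = C }

def IsBasal (G : Type*) [Group G] (B : Subgroup G) : Prop :=
  B ≠ ⊥ ∧ (conjugatesSet G B).Finite ∧
  (∀ C ∈ conjugatesSet G B, ∀ D ∈ conjugatesSet G B, C ≠ D →
      C ⊓ D = ⊥ ∧ ∀ x ∈ C, ∀ y ∈ D, Commute x y) ∧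
  iSupIndep (fun C : conjugatesSet G B => (C : Subgroup G)) ∧
  (⨆ C ∈ conjugatesSet G B, C) = Subgroup.normalClosure (B : Set G)

/-!
If `H` is just infinite and `H ≤ M`, a nontrivial `L ⊴ M` either meets `H` in a nontrivial normal
subgroup of `H`, which has finite index, or commutes with `H`; in the latter case `C_G(H)` is a
nontrivial normal subgroup of `G`, so `C_G(H) ∩ H` is an abelian subgroup of finite index.

Conversely, suppose a nontrivial `L ⊴ H` has infinite index. `L` has finitely many conjugates, and a
minimal nontrivial intersection `B ≤ L` of some of them has conjugates that are pairwise equal or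
intersect trivially; as they all lie in `H` and are normalized by `H`, distinct conjugates commute.
Choose a maximal subgroup `M ⊇ N_G(B)` (proper, as `B` is not normal) and `g ∉ M`, so that `B^g`
differs from every `B^m` with `m ∈ M`. Since `M` is just infinite, both `K = ⟨B^m | m ∈ M⟩` and
`C_G(K) ∩ M ∋ B^g` have finite index, so `K ∩ C_G(K)` is an abelian subgroup of finite index.
-/

open Subgroup MulAction Pointwise

section

variable {G : Type*} [Group G]

theorem ResiduallyFinite.subgroup (hG : ResiduallyFinite G) (K : Subgroup G) :
    ResiduallyFinite K := by
  refine eq_bot_iff.2 fun x hx => ?_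
  have hxG : (x : G) ∈ sInf {N : Subgroup G | N.Normal ∧ N.FiniteIndex} :=
    mem_sInf.2 fun N ⟨hN, _⟩ => mem_sInf.1 hx (N.subgroupOf K) ⟨hN.subgroupOf K, inferInstance⟩
  rw [hG, mem_bot] at hxG
  exact mem_bot.2 (Subtype.ext hxG)

theorem Subgroup.infinite_of_finiteIndex [Infinite G] (K : Subgroup G) [K.FiniteIndex] :
    Infinite K :=
  not_finite_iff_infinite.1 fun hK =>
    ((finite_iff_finite_and_finiteIndex K).2 ⟨hK, inferInstance⟩).false

theorem Subgroup.finiteIndex_of_subgroupOf {L M : Subgroup G} [M.FiniteIndex] (hLM : L ≤ M)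
    [hL : (L.subgroupOf M).FiniteIndex] : L.FiniteIndex :=
  ⟨by rw [← relIndex_mul_index hLM]; exact mul_ne_zero hL.index_ne_zero FiniteIndex.index_ne_zero⟩

theorem JustInfinite.finiteIndex_of_le_normalizer {M L : Subgroup G} (hM : JustInfinite M)
    [M.FiniteIndex] (hLM : L ≤ M) (hML : M ≤ normalizer L) (hL : L ≠ ⊥) : L.FiniteIndex := by
  have := hM.2.2 (L.subgroupOf M) ((normal_subgroupOf_iff_le_normalizer hLM).2 hML)
    (by rwa [Ne, subgroupOf_eq_bot, disjoint_iff, inf_eq_left.2 hLM])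
  exact finiteIndex_of_subgroupOf hLM

theorem justInfinite_of_forall_finiteIndex [Infinite G] (hG : ResiduallyFinite G)
    {M : Subgroup G} [M.FiniteIndex]
    (h : ∀ L : Subgroup G, L ≤ M → M ≤ normalizer L → L ≠ ⊥ → L.FiniteIndex) :
    JustInfinite M := by
  refine ⟨M.infinite_of_finiteIndex, hG.subgroup M, fun N hN hN' => ?_⟩
  have hNM : N.map M.subtype ≤ M := map_subtype_le N
  have hN_eq : (N.map M.subtype).subgroupOf M = N :=
    comap_map_eq_self_of_injective M.subtype_injective N
  have := h _ hNM ((normal_subgroupOf_iff_le_normalizer hNM).1 (by rwa [hN_eq]))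
    ((map_eq_bot_iff_of_injective N M.subtype_injective).not.2 hN')
  rw [← hN_eq]
  infer_instance

theorem Subgroup.le_centralizer_of_le_normalizer_of_disjoint {A B : Subgroup G}
    (hA : A ≤ normalizer B) (hB : B ≤ normalizer A) (h : Disjoint A B) : A ≤ centralizer B := by
  rw [← commutator_eq_bot_iff_le_centralizer, eq_bot_iff, ← h.eq_bot, commutator_le]
  rw [le_normalizer_iff] at hA hB
  intro a ha b hb
  rw [commutatorElement_def]
  refine mem_inf.2 ⟨?_, B.mul_mem (hA a ha b hb) (B.inv_mem hb)⟩
  simpa only [mul_assoc] using A.mul_mem ha (hB b hb _ (A.inv_mem ha))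

theorem Subgroup.normalizer_le_normalizer_centralizer (K : Subgroup G) :
    normalizer K ≤ normalizer ((centralizer K : Subgroup G) : Set G) := by
  rw [le_normalizer_iff]
  intro g hg c hc
  rw [mem_centralizer_iff] at hc ⊢
  intro k hk
  have hk' : g⁻¹ * k * g ∈ K := by
    simpa using (mem_normalizer_iff.1 hg (g⁻¹ * k * g)).2 (by simpa [mul_assoc] using hk)
  calc k * (g * c * g⁻¹) = g * ((g⁻¹ * k * g) * c) * g⁻¹ := by group
    _ = g * (c * (g⁻¹ * k * g)) * g⁻¹ := by rw [hc _ hk']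
    _ = g * c * g⁻¹ * k := by group

theorem virtuallyAbelian_of_le_centralizer {A B : Subgroup G} [A.FiniteIndex] [B.FiniteIndex]
    (h : A ≤ centralizer B) : VirtuallyAbelian G :=
  ⟨A ⊓ B, inferInstance, fun a b => Subtype.ext (mem_centralizer_iff.1 (h a.2.1) b b.2.2).symm⟩

theorem JustInfinite.of_normal_le (hG : JustInfinite G) (hnva : ¬ VirtuallyAbelian G)
    {H M : Subgroup G} [H.Normal] [H.FiniteIndex] (hHji : JustInfinite H) (hHM : H ≤ M) :
    JustInfinite M := by
  have := hG.1
  have : M.FiniteIndex := finiteIndex_of_le hHM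
  refine justInfinite_of_forall_finiteIndex hG.2.1 fun L hLM hML hL => ?_
  by_cases hLH : Disjoint L H
  · have hLC := le_centralizer_of_le_normalizer_of_disjoint le_normalizer_of_normal
      (hHM.trans hML) hLH
    have : (centralizer (H : Set G)).FiniteIndex :=
      hG.2.2 _ inferInstance (ne_bot_of_le_ne_bot hL hLC)
    exact absurd (virtuallyAbelian_of_le_centralizer (le_refl (centralizer (H : Set G)))) hnva
  · have : (L ⊓ H).FiniteIndex := hHji.finiteIndex_of_le_normalizer inf_le_right
      ((le_inf (hHM.trans hML) le_normalizer).trans inf_normalizer_le_normalizer_inf)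
      (by rwa [Ne, ← disjoint_iff])
    exact finiteIndex_of_le (inf_le_left : L ⊓ H ≤ L)

theorem Subgroup.exists_le_isCoatom_of_finiteIndex {S : Subgroup G} [S.FiniteIndex] (hS : S ≠ ⊤) :
    ∃ M, S ≤ M ∧ IsCoatom M := by
  -- the subgroups containing `S` are the stabilizers of the blocks of `G ⧸ S` containing `1`
  have e := block_stabilizerOrderIso G ((1 : G) : G ⧸ S)
  rw [stabilizer_quotient] at e
  have : Finite (Set.Ici S) := Finite.of_equiv _ e.toEquiv
  obtain ⟨M, hM, hSM⟩ := (eq_top_or_exists_le_coatom (⟨S, Set.mem_Ici.2 le_rfl⟩ : Set.Ici S))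
    |>.resolve_left fun h => hS (congrArg Subtype.val h)
  exact ⟨M, hSM, hM.of_isCoatom_coe_Ici⟩

theorem Subgroup.smul_eq_bot_iff {α : Type*} [Group α] [MulDistribMulAction α G] (a : α)
    {A : Subgroup G} : a • A = ⊥ ↔ A = ⊥ :=
  ⟨fun h => by simpa using congrArg (a⁻¹ • ·) h, fun h => by rw [h, smul_bot]⟩

theorem Subgroup.disjoint_smul_smul_iff {α : Type*} [Group α] [MulDistribMulAction α G] (a : α)
    {A B : Subgroup G} : Disjoint (a • A) (a • B) ↔ Disjoint A B := by
  rw [disjoint_iff, disjoint_iff, ← smul_inf, smul_eq_bot_iff]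

theorem Subgroup.smul_sInf {α : Type*} [Group α] [MulDistribMulAction α G] (a : α)
    (s : Set (Subgroup G)) : a • sInf s = sInf (a • s) := by
  ext x
  simp only [mem_sInf, ← Set.image_smul, Set.forall_mem_image, mem_pointwise_smul_iff_inv_smul_mem]

theorem Subgroup.smul_iSup {α ι : Type*} [Group α] [MulDistribMulAction α G] (a : α)
    (f : ι → Subgroup G) : a • ⨆ i, f i = ⨆ i, a • f i :=
  map_iSup _ f

theorem Subgroup.le_normalizer_sInf {H : Subgroup G} {s : Set (Subgroup G)}
    (h : ∀ K ∈ s, H ≤ normalizer K) : H ≤ normalizer (sInf s : Subgroup G) := by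
  rw [sInf_eq_iInf']
  exact (le_iInf fun K : s => h K K.2).trans (iInf_normalizer_le_normalizer_iInf _)

theorem Subgroup.conjAct_smul_le {B H : Subgroup G} [hH : H.Normal] (hBH : B ≤ H)
    (g : ConjAct G) : g • B ≤ H :=
  (pointwise_smul_le_pointwise_smul_iff.2 hBH).trans_eq (hH.conjAct g)

theorem Subgroup.le_normalizer_smul {H K : Subgroup G} [hH : H.Normal] (hK : H ≤ normalizer K)
    (g : ConjAct G) : H ≤ normalizer (g • K) := by
  rw [le_normalizer_iff] at hK ⊢
  intro h hh k hk
  rw [mem_pointwise_smul_iff_inv_smul_mem] at hk ⊢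
  rw [smul_mul', smul_mul', smul_inv']
  exact hK _ (by simpa [hH.conjAct] using smul_mem_pointwise_smul h g⁻¹ H hh) _ hk

theorem Subgroup.le_normalizer_iSup_conj (M B : Subgroup G) :
    M ≤ normalizer ((⨆ m : M, ConjAct.toConjAct (m : G) • B : Subgroup G) : Set G) := by
  intro m hm
  have hsmul : ∀ m' : M, ConjAct.toConjAct m • ConjAct.toConjAct (m' : G) • B =
      ConjAct.toConjAct ((⟨m, hm⟩ * m' : M) : G) • B := fun m' => by
    rw [smul_smul, ← map_mul]
    rfl
  rw [← conjAct_pointwise_smul_iff, smul_iSup]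
  simp only [hsmul]
  exact (Equiv.mulLeft (⟨m, hm⟩ : M)).iSup_comp
    (g := fun m' : M => ConjAct.toConjAct (m' : G) • B)

theorem Subgroup.finite_orbit_conjAct (L : Subgroup G) [(normalizer (L : Set G)).FiniteIndex] :
    (orbit (ConjAct G) L).Finite := by
  let e : G ≃* ConjAct G := ConjAct.toConjAct
  have : (stabilizer (ConjAct G) L).comap e.toMonoidHom = normalizer L := by
    ext g
    simp only [mem_comap, MulEquiv.coe_toMonoidHom, mem_stabilizer_iff]
    exact conjAct_pointwise_smul_iff
  apply Set.finite_of_ncard_ne_zero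
  rw [← index_stabilizer, ← index_comap_of_surjective (f := e.toMonoidHom) _ e.surjective, this]
  exact FiniteIndex.index_ne_zero

theorem Subgroup.exists_le_forall_smul_eq_or_disjoint {α : Type*} [Group α]
    [MulDistribMulAction α G] {𝓘 : Set (Subgroup G)} (hfin : 𝓘.Finite)
    (hinf : ∀ A ∈ 𝓘, ∀ B ∈ 𝓘, A ⊓ B ∈ 𝓘) (hsmul : ∀ a : α, ∀ A ∈ 𝓘, a • A ∈ 𝓘)
    {L : Subgroup G} (hL : L ∈ 𝓘) (hL' : L ≠ ⊥) :
    ∃ B ∈ 𝓘, B ≤ L ∧ B ≠ ⊥ ∧ ∀ a : α, a • B = B ∨ Disjoint B (a • B) := by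
  obtain ⟨B, hBL, hB⟩ := (hfin.sep (· ≠ ⊥)).isPWO.exists_le_minimal ⟨hL, hL'⟩
  have key : ∀ a : α, ¬ Disjoint B (a • B) → B ≤ a • B := fun a h =>
    (hB.2 ⟨hinf _ hB.1.1 _ (hsmul a _ hB.1.1), by rwa [Ne, ← disjoint_iff]⟩ inf_le_left).trans
      inf_le_right
  refine ⟨B, hB.1.1, hBL, hB.1.2, fun a => or_iff_not_imp_right.2 fun h => ?_⟩
  have hle := key a h
  have hle' : a⁻¹ • B ≤ B := subset_pointwise_smul_iff.1 hle
  have h' : ¬ Disjoint B (a⁻¹ • B) := by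
    rw [disjoint_iff, inf_eq_right.2 hle']
    intro h0
    exact hB.1.2 (by simpa using congrArg (a • ·) h0)
  exact le_antisymm (pointwise_smul_subset_iff.2 (key a⁻¹ h')) hle

theorem Subgroup.exists_le_forall_conj_eq_or_disjoint {H L : Subgroup G} [H.Normal]
    [H.FiniteIndex] (hHL : H ≤ normalizer L) (hL : L ≠ ⊥) :
    ∃ B ≤ L, B ≠ ⊥ ∧ H ≤ normalizer B ∧ ∀ g : ConjAct G, g • B = B ∨ Disjoint B (g • B) := by
  have : (normalizer (L : Set G)).FiniteIndex := finiteIndex_of_le hHL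
  let 𝓘 := sInf '' 𝒫 (orbit (ConjAct G) L)
  have hfin : 𝓘.Finite := L.finite_orbit_conjAct.powerset.image _
  have hinf : ∀ A ∈ 𝓘, ∀ B ∈ 𝓘, A ⊓ B ∈ 𝓘 := by
    rintro _ ⟨s, hs, rfl⟩ _ ⟨t, ht, rfl⟩
    exact ⟨s ∪ t, Set.union_subset hs ht, sInf_union⟩
  have hsmul : ∀ g : ConjAct G, ∀ A ∈ 𝓘, g • A ∈ 𝓘 := by
    rintro g _ ⟨s, hs, rfl⟩
    exact ⟨g • s, (Set.smul_set_mono hs).trans (smul_orbit_subset g L), (smul_sInf g s).symm⟩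
  have hL𝓘 : L ∈ 𝓘 := ⟨{L}, Set.singleton_subset_iff.2 (mem_orbit_self L), sInf_singleton⟩
  obtain ⟨B, ⟨s, hs, rfl⟩, hBL, hB, hdisj⟩ :=
    exists_le_forall_smul_eq_or_disjoint hfin hinf hsmul hL𝓘 hL
  refine ⟨_, hBL, hB, le_normalizer_sInf fun K hK => ?_, hdisj⟩
  obtain ⟨g, rfl⟩ := hs hK
  exact le_normalizer_smul hHL g

theorem Subgroup.smul_le_centralizer_smul {H B : Subgroup G} [H.Normal] (hBH : B ≤ H)
    (hHB : H ≤ normalizer B) (hdisj : ∀ g : ConjAct G, g • B = B ∨ Disjoint B (g • B))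
    {g₁ g₂ : ConjAct G} (hne : g₁ • B ≠ g₂ • B) : g₁ • B ≤ centralizer (g₂ • B) := by
  refine le_centralizer_of_le_normalizer_of_disjoint
    ((conjAct_smul_le hBH g₁).trans (le_normalizer_smul hHB g₂))
    ((conjAct_smul_le hBH g₂).trans (le_normalizer_smul hHB g₁)) ?_
  have hne' : (g₁⁻¹ * g₂) • B ≠ B := fun h =>
    hne (by rw [← mul_inv_cancel_left g₁ g₂, mul_smul, h])
  have := (hdisj (g₁⁻¹ * g₂)).resolve_left hne'
  rwa [← disjoint_smul_smul_iff g₁, smul_smul, mul_inv_cancel_left] at this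

theorem virtuallyAbelian_of_forall_conj_eq_or_disjoint (hG : JustInfinite G)
    {H B : Subgroup G} [H.Normal] [H.FiniteIndex]
    (hmax : ∀ M : Subgroup G, H ≤ M → IsCoatom M → JustInfinite M)
    (hBH : B ≤ H) (hHB : H ≤ normalizer B) (hB : B ≠ ⊥) (hBi : ¬ B.FiniteIndex)
    (hdisj : ∀ g : ConjAct G, g • B = B ∨ Disjoint B (g • B)) : VirtuallyAbelian G := by
  have : (normalizer (B : Set G)).FiniteIndex := finiteIndex_of_le hHB
  obtain ⟨M, hNM, hM⟩ := exists_le_isCoatom_of_finiteIndex (S := normalizer (B : Set G))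
    fun h => hBi (hG.2.2 B (normalizer_eq_top_iff.1 h) hB)
  have hHM : H ≤ M := hHB.trans hNM
  have : M.FiniteIndex := finiteIndex_of_le hHM
  have hMji := hmax M hHM hM
  obtain ⟨g, -, hg⟩ := SetLike.exists_of_lt hM.1.lt_top
  have hDne : ∀ m : M, ConjAct.toConjAct (m : G) • B ≠ ConjAct.toConjAct g • B := by
    intro m h
    have : (m : G)⁻¹ * g ∈ normalizer (B : Set G) := by
      rw [← conjAct_pointwise_smul_iff, map_mul, map_inv, mul_smul, ← h, inv_smul_smul]
    exact hg (by simpa using M.mul_mem m.2 (hNM this))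
  set K := ⨆ m : M, ConjAct.toConjAct (m : G) • B
  set D := ConjAct.toConjAct g • B
  have hKH : K ≤ H := iSup_le fun m => conjAct_smul_le hBH _
  have hBK : B ≤ K := le_iSup_of_le 1 (by simp)
  have hKD : K ≤ centralizer D := iSup_le fun m => smul_le_centralizer_smul hBH hHB hdisj (hDne m)
  have hK : K.FiniteIndex := hMji.finiteIndex_of_le_normalizer (hKH.trans hHM)
    (le_normalizer_iSup_conj M B) (ne_bot_of_le_ne_bot hB hBK)
  have hDE : D ≤ centralizer K ⊓ M :=
    le_inf (le_centralizer_iff.1 hKD) ((conjAct_smul_le hBH _).trans hHM)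
  have hE : (centralizer K ⊓ M).FiniteIndex := hMji.finiteIndex_of_le_normalizer inf_le_right
    ((le_inf ((le_normalizer_iSup_conj M B).trans (normalizer_le_normalizer_centralizer K))
      le_normalizer).trans inf_normalizer_le_normalizer_inf)
    (ne_bot_of_le_ne_bot ((smul_eq_bot_iff _).not.2 hB) hDE)
  exact virtuallyAbelian_of_le_centralizer (A := centralizer K ⊓ M) (B := K) inf_le_left

end

/-- Theorem 1: a nontrivial normal subgroup H of a just infinite, non
virtually abelian group G is just infinite iff every maximal subgroup of G
containing H is just infinite. -/
theorem justInfinite_iff_maximal_subgroups {G : Type*} [Group G]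
    (hji : JustInfinite G) (hnva : ¬ VirtuallyAbelian G)
    (H : Subgroup G) (hH : H ≠ ⊥) (hn : H.Normal) :
    JustInfinite H ↔
      ∀ M : Subgroup G, H ≤ M → IsCoatom M → JustInfinite M := by
  have := hji.1
  have : H.FiniteIndex := hji.2.2 H hn hH
  refine ⟨fun hHji M hHM _ => hji.of_normal_le hnva hHji hHM, fun hmax => ?_⟩
  refine justInfinite_of_forall_finiteIndex hji.2.1 fun L hLH hHL hL => ?_
  by_contra hLi
  obtain ⟨B, hBL, hB, hHB, hdisj⟩ := exists_le_forall_conj_eq_or_disjoint hHL hL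
  exact hnva (virtuallyAbelian_of_forall_conj_eq_or_disjoint hji hmax (hBL.trans hLH) hHB hB
    (fun hBi => hLi (finiteIndex_of_le hBL)) hdisj)
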